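/- arXiv:2605.24596 — 3 statements merged into one kernel-verified Lean document; each statement's English description precedes it below -/
import Mathlib

section
/- Let d ≥ 2 and let ψ be an N-function such that ∫_a^∞ (t/ψ(t))^{1/(d−1)} dt < ∞ for some a > 0. Then ψ⁻¹(s) = o(s^{1/d}) as s → ∞; that is, for every ε > 0 there exists s_ε > 0 such that ψ⁻¹(s) ≤ ε·s^{1/d} for all s ≥ s_ε. -/
/-- `ψ` is an N-function. -/
def IsNFunction (ψ : ℝ → ℝ) : Prop :=
  ConvexOn ℝ (Set.Ici 0) ψ ∧ MonotoneOn ψ (Set.Ici 0) ∧ ψ 0 = 0 ∧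
  Filter.Tendsto (fun t => ψ t / t) (nhdsWithin 0 (Set.Ioi 0)) (nhds 0) ∧
  Filter.Tendsto (fun t => ψ t / t) Filter.atTop Filter.atTop

theorem stmt5 (d : ℕ) (hd : 2 ≤ d) (ψ ψinv : ℝ → ℝ) (hN : IsNFunction ψ)
    (hinv : ∀ t ≥ (0:ℝ), 0 ≤ ψinv t ∧ ψinv (ψ t) = t ∧ ψ (ψinv t) = t)
    (a : ℝ) (ha : 0 < a)
    (hint : MeasureTheory.IntegrableOn
      (fun t => (t / ψ t) ^ ((1:ℝ) / ((d:ℝ) - 1))) (Set.Ici a)) :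
    ∀ ε > (0:ℝ), ∃ sε > (0:ℝ), ∀ s ≥ sε, ψinv s ≤ ε * s ^ ((1:ℝ) / (d:ℝ)) := by
  classical
  obtain ⟨hconv, hmono, hzero, -, htop⟩ := hN
  have hq2 : (2:ℝ) ≤ (d:ℝ) := by exact_mod_cast hd
  set q : ℝ := (d:ℝ) with hqdef
  have hq1 : (1:ℝ) < q := by linarith
  have hqm1 : (0:ℝ) < q - 1 := by linarith
  have hq0 : (0:ℝ) < q := by linarith
  set p : ℝ := (1:ℝ) / (q - 1) with hpdef
  have hp0 : 0 < p := by positivity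
  have hpq : p * (q - 1) = 1 := one_div_mul_cancel hqm1.ne'
  set f : ℝ → ℝ := fun t => (t / ψ t) ^ p with hfdef
  -- ψ is nonnegative on [0,∞)
  have hψ_nonneg : ∀ t : ℝ, 0 ≤ t → 0 ≤ ψ t := by
    intro t ht
    have := hmono (Set.mem_Ici.2 le_rfl) (Set.mem_Ici.2 ht) ht
    simpa [hzero] using this
  -- slope monotonicity from convexity
  have slope : ∀ s t : ℝ, 0 < s → s ≤ t → ψ s * t ≤ ψ t * s := by
    intro s t hs hst
    have ht : 0 < t := lt_of_lt_of_le hs hst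
    have hb : (0:ℝ) ≤ s / t := by positivity
    have ha' : (0:ℝ) ≤ 1 - s / t := by
      have : s / t ≤ 1 := (div_le_one ht).2 hst
      linarith
    have hab : (1 - s / t) + s / t = 1 := by ring
    have h1 := hconv.2 (Set.mem_Ici.2 le_rfl) (Set.mem_Ici.2 ht.le) ha' hb hab
    simp only [smul_eq_mul, mul_zero, zero_add, hzero] at h1
    have h2 : s / t * t = s := div_mul_cancel₀ s ht.ne'
    rw [h2] at h1
    -- h1 : ψ s ≤ (1 - s/t) * 0 + s/t * ψ t  (already simplified)
    have h3 := mul_le_mul_of_nonneg_right h1 ht.le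
    calc ψ s * t ≤ s / t * ψ t * t := h3
      _ = ψ t * s := by field_simp
  -- threshold beyond which ψ t ≥ t
  obtain ⟨t1, ht1⟩ := Filter.eventually_atTop.1 (htop.eventually_ge_atTop 1)
  set t0 : ℝ := max (max a 1) t1 with ht0def
  have ht0a : a ≤ t0 := le_trans (le_max_left a 1) (le_max_left _ _)
  have ht01 : (1:ℝ) ≤ t0 := le_trans (le_max_right a 1) (le_max_left _ _)
  have ht0pos : (0:ℝ) < t0 := by linarith
  have hψt : ∀ t : ℝ, t0 ≤ t → t ≤ ψ t := by
    intro t ht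
    have htpos : (0:ℝ) < t := lt_of_lt_of_le ht0pos ht
    have := ht1 t (le_trans (le_max_right _ _) ht)
    exact (one_le_div htpos).1 this
  have hψpos : ∀ t : ℝ, t0 ≤ t → 0 < ψ t := fun t ht =>
    lt_of_lt_of_le (lt_of_lt_of_le ht0pos ht) (hψt t ht)
  -- f is antitone on [t0, ∞)
  have hantit : ∀ s t : ℝ, t0 ≤ s → s ≤ t → f t ≤ f s := by
    intro s t hs hst
    have hspos : (0:ℝ) < s := lt_of_lt_of_le ht0pos hs
    have htpos : (0:ℝ) < t := lt_of_lt_of_le hspos hst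
    have hψs : 0 < ψ s := hψpos s hs
    have hψtp : 0 < ψ t := hψpos t (le_trans hs hst)
    have hbase : t / ψ t ≤ s / ψ s := by
      rw [div_le_div_iff₀ hψtp hψs]
      have := slope s t hspos hst
      nlinarith
    exact Real.rpow_le_rpow (by positivity) hbase hp0.le
  have hf_nonneg : ∀ t : ℝ, t0 ≤ t → 0 ≤ f t := by
    intro t ht
    have : (0:ℝ) ≤ t / ψ t := div_nonneg (by linarith [lt_of_lt_of_le ht0pos ht]) (hψpos t ht).le
    exact Real.rpow_nonneg this p
  -- interval integrability helper
  have ii : ∀ u v : ℝ, a ≤ u → u ≤ v → IntervalIntegrable f MeasureTheory.volume u v := by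
    intro u v hu huv
    apply (hint.mono_set ?_).intervalIntegrable
    rw [Set.uIcc_of_le huv]
    exact fun x hx => le_trans hu hx.1
  have hi : MeasureTheory.IntegrableOn f (Set.Ioi t0) :=
    hint.mono_set (fun x hx => le_trans ht0a (le_of_lt hx))
  set I : ℝ := ∫ x in Set.Ioi t0, f x with hIdef
  have htendI : Filter.Tendsto (fun b => ∫ x in t0..b, f x) Filter.atTop (nhds I) :=
    MeasureTheory.intervalIntegral_tendsto_integral_Ioi t0 hi Filter.tendsto_id
  have htendI2 : Filter.Tendsto (fun t => ∫ x in t0..(t / 2), f x) Filter.atTop (nhds I) :=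
    htendI.comp (Filter.Tendsto.atTop_div_const two_pos Filter.tendsto_id)
  have hdiff : Filter.Tendsto
      (fun t => (∫ x in t0..t, f x) - ∫ x in t0..(t / 2), f x) Filter.atTop (nhds 0) := by
    simpa using htendI.sub htendI2
  intro ε hε
  set δ : ℝ := ε ^ (q / (q - 1)) with hδdef
  have hδ0 : 0 < δ := Real.rpow_pos_of_pos hε _
  have hev1 : ∀ᶠ t in Filter.atTop,
      (∫ x in t0..t, f x) - (∫ x in t0..(t / 2), f x) < δ / 2 :=
    hdiff.eventually_lt_const (by positivity)
  have hev2 : ∀ᶠ t in Filter.atTop, 2 * t0 ≤ t := Filter.eventually_ge_atTop _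
  obtain ⟨T, hT⟩ := Filter.eventually_atTop.1 (hev1.and hev2)
  -- the key pointwise bound
  have key : ∀ t : ℝ, T ≤ t → t ≤ ε * (ψ t) ^ (1 / q) := by
    intro t ht
    obtain ⟨hlt, h2t0⟩ := hT t ht
    have ht0half : t0 ≤ t / 2 := by linarith
    have ht0t : t0 ≤ t := le_trans ht0half (by linarith)
    have htpos : (0:ℝ) < t := lt_of_lt_of_le ht0pos ht0t
    have hψtp : 0 < ψ t := hψpos t ht0t
    have hahalf : a ≤ t / 2 := le_trans ht0a ht0half
    have hsplit : (∫ x in (t / 2)..t, f x)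
        = (∫ x in t0..t, f x) - ∫ x in t0..(t / 2), f x :=
      (intervalIntegral.integral_interval_sub_left (ii t0 t ht0a ht0t)
        (ii t0 (t / 2) ht0a ht0half)).symm
    have hmean : (t - t / 2) * f t ≤ ∫ x in (t / 2)..t, f x := by
      have h1 : (∫ _x in (t / 2)..t, f t) ≤ ∫ x in (t / 2)..t, f x := by
        apply intervalIntegral.integral_mono_on (by linarith) intervalIntegrable_const
          (ii (t / 2) t hahalf (by linarith))
        intro x hx
        exact hantit x t (le_trans ht0half hx.1) hx.2
      simpa [smul_eq_mul] using h1
    have hfnn : 0 ≤ f t := hf_nonneg t ht0t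
    have hδle : t * f t ≤ δ := by
      have : (t / 2) * f t ≤ δ / 2 := by
        have h2 : (t - t / 2) * f t < δ / 2 := lt_of_le_of_lt (hsplit ▸ hmean) hlt
        nlinarith
      nlinarith
    -- convert to t^q / ψ t ≤ ε^q
    have h3 : (t * f t) ^ (q - 1) ≤ δ ^ (q - 1) :=
      Real.rpow_le_rpow (by positivity) hδle hqm1.le
    have hdivnn : (0:ℝ) ≤ t / ψ t := by positivity
    have h4 : (t * f t) ^ (q - 1) = t ^ (q - 1) * (t / ψ t) := by
      simp only [hfdef]
      rw [Real.mul_rpow htpos.le (Real.rpow_nonneg hdivnn p),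
        ← Real.rpow_mul hdivnn, hpq, Real.rpow_one]
    have hδq : δ ^ (q - 1) = ε ^ q := by
      rw [hδdef, ← Real.rpow_mul hε.le, div_mul_cancel₀ _ hqm1.ne']
    have h5 : t ^ (q - 1) * (t / ψ t) ≤ ε ^ q := by rw [← h4, ← hδq]; exact h3
    have h6 : t ^ (q - 1) * (t / ψ t) = t ^ q / ψ t := by
      rw [mul_div_assoc']
      congr 1
      have : t ^ q = t ^ ((q - 1) + 1) := by norm_num
      rw [this, Real.rpow_add htpos, Real.rpow_one]
    have h7 : t ^ q ≤ ε ^ q * ψ t := by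
      rw [h6] at h5
      exact (div_le_iff₀ hψtp).1 h5
    have h8 := Real.rpow_le_rpow (Real.rpow_nonneg htpos.le q) h7
      (by positivity : (0:ℝ) ≤ 1 / q)
    rw [← Real.rpow_mul htpos.le, mul_one_div_cancel hq0.ne', Real.rpow_one,
      Real.mul_rpow (Real.rpow_nonneg hε.le q) hψtp.le,
      ← Real.rpow_mul hε.le, mul_one_div_cancel hq0.ne', Real.rpow_one] at h8
    exact h8
  -- assemble the final statement
  set T' : ℝ := max T 1 with hT'def
  have hT'0 : (0:ℝ) ≤ T' := le_trans zero_le_one (le_max_right _ _)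
  refine ⟨max (ψ T') 1, lt_of_lt_of_le one_pos (le_max_right _ _), ?_⟩
  intro s hs
  have hs1 : (1:ℝ) ≤ s := le_trans (le_max_right _ _) hs
  have hsψ : ψ T' ≤ s := le_trans (le_max_left _ _) hs
  obtain ⟨htnn, -, hψinv⟩ := hinv s (by linarith)
  -- ψinv s ≥ T'
  have hTt : T' ≤ ψinv s := by
    by_contra hcon
    push_neg at hcon
    have h1 : ψ (ψinv s) ≤ ψ T' :=
      hmono (Set.mem_Ici.2 htnn) (Set.mem_Ici.2 hT'0) hcon.le
    rw [hψinv] at h1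
    have hse : s = ψ T' := le_antisymm h1 hsψ
    have : ψinv s = T' := by
      rw [hse]
      exact (hinv T' hT'0).2.1
    rw [this] at hcon
    exact absurd hcon (lt_irrefl _)
  have := key (ψinv s) (le_trans (le_max_left T 1) hTt)
  rwa [hψinv] at this
end

section
/- Let d ≥ 2 and let ψ be an N-function with ∫_a^∞ (t/ψ(t))^{1/(d−1)} dt < ∞ for some a > 0. Then r·ψ⁻¹(r^{−d}) → 0 as r → 0⁺. -/
/-!
The function `f t = (t / ψ t) ^ (1 / (d - 1))` is eventually antitone, because the slope `ψ t / t`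
of the convex function `ψ` (with `ψ 0 = 0`) is nondecreasing. An integrable antitone function
satisfies `t * f t ≤ 2 ∫_{t/2}^t f → 0`. With `u = ψ⁻¹ (r ^ (-d))`, which tends to `∞` as
`r → 0⁺`, one computes `u * f u = (r * u) ^ (d / (d - 1))`, hence `r * u → 0`.
-/

open Filter MeasureTheory Set Topology

theorem AntitoneOn.tendsto_mul_nhds_zero_of_integrableOn {f : ℝ → ℝ} {b : ℝ}
    (hanti : AntitoneOn f (Ici b)) (hnonneg : ∀ t ∈ Ici b, 0 ≤ f t)
    (hint : IntegrableOn f (Ici b)) :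
    Tendsto (fun t => t * f t) atTop (𝓝 0) := by
  have hII : ∀ x ∈ Ici b, ∀ y ∈ Ici b, IntervalIntegrable f volume x y := fun x hx y hy =>
    (hint.mono_set fun _ hz => (le_min hx hy).trans hz.1).intervalIntegrable
  have hprim : Tendsto (fun t => ∫ s in b..t, f s) atTop (𝓝 (∫ s in Ioi b, f s)) :=
    intervalIntegral_tendsto_integral_Ioi b (hint.mono_set Ioi_subset_Ici_self) tendsto_id
  have hdiff : Tendsto (fun t => 2 * ((∫ s in b..t, f s) - ∫ s in b..t / 2, f s))
      atTop (𝓝 0) := by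
    simpa using (hprim.sub (hprim.comp (tendsto_id.atTop_div_const two_pos))).const_mul 2
  refine squeeze_zero' ?_ ?_ hdiff
  · filter_upwards [eventually_ge_atTop (max b 0)] with t ht
    exact mul_nonneg ((le_max_right _ _).trans ht) (hnonneg t ((le_max_left _ _).trans ht))
  · filter_upwards [eventually_ge_atTop (2 * max b 0)] with t ht
    have hb2 : b ≤ t / 2 := by linarith [le_max_left b 0, le_max_right b 0]
    have ht2 : t / 2 ≤ t := by linarith [le_max_right b 0]
    have hb : t ∈ Ici b := hb2.trans ht2
    rw [intervalIntegral.integral_interval_sub_left (hII b self_mem_Ici t hb)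
      (hII b self_mem_Ici _ hb2)]
    have hlow : ∫ _ in t / 2..t, f t ≤ ∫ s in t / 2..t, f s :=
      intervalIntegral.integral_mono_on ht2 intervalIntegrable_const (hII _ hb2 t hb)
        fun x hx => hanti (hb2.trans hx.1) hb hx.2
    rw [intervalIntegral.integral_const, smul_eq_mul] at hlow
    linarith

theorem tendsto_atTop_of_rightInvOn_of_monotoneOn {ψ ψinv : ℝ → ℝ}
    (hmono : MonotoneOn ψ (Ici 0)) (hnonneg : ∀ t ≥ 0, 0 ≤ ψinv t)
    (hright : ∀ t ≥ 0, ψ (ψinv t) = t) :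
    Tendsto ψinv atTop atTop := by
  refine tendsto_atTop.2 fun M => ?_
  filter_upwards [eventually_gt_atTop (max (ψ (max M 0)) 0)] with s hs
  rw [max_lt_iff] at hs
  by_contra! h
  have := hmono (hnonneg s hs.2.le) (le_max_right M 0) (h.le.trans (le_max_left M 0))
  rw [hright s hs.2.le] at this
  linarith

theorem tendsto_nhds_zero_of_tendsto_rpow {α : Type*} {l : Filter α} {g : α → ℝ} {c : ℝ}
    (hc : 0 < c) (hg : ∀ᶠ x in l, 0 ≤ g x) (h : Tendsto (fun x => g x ^ c) l (𝓝 0)) :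
    Tendsto g l (𝓝 0) := by
  have := h.rpow_const (p := c⁻¹) (Or.inr (inv_nonneg.2 hc.le))
  rw [Real.zero_rpow (inv_ne_zero hc.ne')] at this
  refine this.congr' ?_
  filter_upwards [hg] with x hx
  exact Real.rpow_rpow_inv hx hc.ne'

theorem self_mul_div_rpow_neg_rpow {q r u : ℝ} (hq : 1 < q) (hr : 0 < r) (hu : 0 ≤ u) :
    u * (u / r ^ (-q)) ^ (1 / (q - 1)) = (r * u) ^ (q / (q - 1)) := by
  have hq1 : q - 1 ≠ 0 := by linarith
  have hexp : q / (q - 1) = 1 + 1 / (q - 1) := by field_simp; ring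
  rw [Real.rpow_neg hr.le, div_inv_eq_mul, Real.mul_rpow hu (by positivity),
    Real.mul_rpow hr.le hu, ← Real.rpow_mul hr.le, ← mul_div_assoc, mul_one,
    hexp, Real.rpow_add' hu (by positivity), Real.rpow_one]
  ring

namespace IsNFunction

variable {ψ : ℝ → ℝ}

theorem eventually_pos (hN : IsNFunction ψ) : ∀ᶠ t in atTop, 0 < ψ t := by
  filter_upwards [hN.2.2.2.2.eventually_gt_atTop 0, eventually_gt_atTop 0] with t h ht
  exact (div_pos_iff_of_pos_right ht).1 h

theorem div_le_div {s t : ℝ} (hN : IsNFunction ψ) (hs : 0 < s) (hst : s ≤ t) :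
    ψ s / s ≤ ψ t / t := by
  have := hN.1.secant_mono (a := 0) self_mem_Ici hs.le (hs.le.trans hst) hs.ne'
    (hs.trans_le hst).ne' hst
  simpa [hN.2.2.1] using this

theorem pos_of_le {b t : ℝ} (hN : IsNFunction ψ) (hb : 0 ≤ b) (hψb : 0 < ψ b) (hbt : b ≤ t) :
    0 < ψ t :=
  hψb.trans_le (hN.2.1 hb (hb.trans hbt) hbt)

theorem antitoneOn_div_rpow {b p : ℝ} (hN : IsNFunction ψ) (hp : 0 ≤ p) (hb : 0 < b)
    (hψb : 0 < ψ b) : AntitoneOn (fun t => (t / ψ t) ^ p) (Ici b) := by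
  intro s hs t ht hst
  have hs0 : 0 < s := hb.trans_le hs
  have hψs : 0 < ψ s := hN.pos_of_le hb.le hψb hs
  refine Real.rpow_le_rpow (div_nonneg (hs0.trans_le hst).le
    (hN.pos_of_le hb.le hψb ht).le) ?_ hp
  rw [← inv_div, ← inv_div (ψ s)]
  exact inv_anti₀ (div_pos hψs hs0) (hN.div_le_div hs0 hst)

end IsNFunction

theorem stmt6_general (d : ℕ) (hd : 2 ≤ d) (ψ ψinv : ℝ → ℝ) (hN : IsNFunction ψ)
    (hinv : ∀ t ≥ (0:ℝ), 0 ≤ ψinv t ∧ ψinv (ψ t) = t ∧ ψ (ψinv t) = t)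
    (a : ℝ)
    (hint : MeasureTheory.IntegrableOn
      (fun t => (t / ψ t) ^ ((1:ℝ) / ((d:ℝ) - 1))) (Set.Ici a)) :
    Filter.Tendsto (fun r : ℝ => r * ψinv (r ^ (-(d:ℝ))))
      (nhdsWithin 0 (Set.Ioi 0)) (nhds 0) := by
  have hq : (1:ℝ) < d := by exact_mod_cast hd
  have hd1 : (0:ℝ) < d - 1 := by linarith
  have hp : (0:ℝ) ≤ 1 / ((d:ℝ) - 1) := by positivity
  obtain ⟨b, hab, hb, hψb⟩ :=
    ((eventually_ge_atTop a).and ((eventually_gt_atTop 0).and hN.eventually_pos)).exists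
  have hanti := hN.antitoneOn_div_rpow hp hb hψb
  have hf := hanti.tendsto_mul_nhds_zero_of_integrableOn
    (fun t ht => Real.rpow_nonneg (div_nonneg (hb.le.trans ht) (hN.pos_of_le hb.le hψb ht).le) _)
    (hint.mono_set (Ici_subset_Ici.2 hab))
  have hu : Tendsto (fun r : ℝ => ψinv (r ^ (-(d:ℝ)))) (𝓝[>] 0) atTop :=
    (tendsto_atTop_of_rightInvOn_of_monotoneOn hN.2.1 (fun t ht => (hinv t ht).1)
      (fun t ht => (hinv t ht).2.2)).comp (tendsto_rpow_neg_nhdsGT_zero (by linarith))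
  refine tendsto_nhds_zero_of_tendsto_rpow (c := d / (d - 1)) (div_pos (by linarith) hd1) ?_
    ((hf.comp hu).congr' ?_)
  all_goals filter_upwards [self_mem_nhdsWithin] with r (hr : 0 < r)
  · exact mul_nonneg hr.le (hinv _ (by positivity)).1
  · obtain ⟨hu0, -, hψu⟩ := hinv (r ^ (-(d:ℝ))) (by positivity)
    simp only [Function.comp_apply]
    rw [hψu, self_mul_div_rpow_neg_rpow hq hr hu0]

theorem stmt6 (d : ℕ) (hd : 2 ≤ d) (ψ ψinv : ℝ → ℝ) (hN : IsNFunction ψ)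
    (hinv : ∀ t ≥ (0:ℝ), 0 ≤ ψinv t ∧ ψinv (ψ t) = t ∧ ψ (ψinv t) = t)
    (a : ℝ) (ha : 0 < a)
    (hint : MeasureTheory.IntegrableOn
      (fun t => (t / ψ t) ^ ((1:ℝ) / ((d:ℝ) - 1))) (Set.Ici a)) :
    Filter.Tendsto (fun r : ℝ => r * ψinv (r ^ (-(d:ℝ))))
      (nhdsWithin 0 (Set.Ioi 0)) (nhds 0) :=
  stmt6_general d hd ψ ψinv hN hinv a hint
end

section
/- Let d ≥ 3, ε > 0, α ∈ ℝ, and ψ(t) = t^{d+ε}(log t)^α for t ≥ t₀ (large). Then the Young conjugate satisfies ψ*(s) ~ s^{(d+ε)/(d+ε−1)}·(log s)^{−α/(d+ε−1)} as s → ∞; more precisely, there exist constants 0 < c₁ ≤ c₂ and s₀ such that c₁ ≤ ψ*(s) / [s^{(d+ε)/(d+ε−1)}(log s)^{−α/(d+ε−1)}] ≤ c₂ for all s ≥ s₀. -/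
/-- The Young conjugate `ψ*(s) = sup_{t ≥ 0} (s·t − ψ(t))`. -/
noncomputable def youngConj (ψ : ℝ → ℝ) (s : ℝ) : ℝ :=
  sSup {x : ℝ | ∃ t ≥ (0:ℝ), x = s * t - ψ t}

/-!
Write `r = d + ε − 1` and `h(t) = t^r (log t)^α`, so that `ψ(t) = t·h(t)` for large `t`.
The scale `T(s) = s^{1/r} (log s)^{−α/r}` is an asymptotic inverse of `h` up to constants:
since `log (c·T(s)) / log s → 1/r`, we get `h(c·T(s)) / s → c^r r^{−α}` for every `c > 0`.
Testing the supremum at `t = λ·T(s)` with `λ^r r^{−α} < 1/2` gives `ψ*(s) ≥ (λ/2)·s·T(s)`.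
Conversely, `h` is eventually increasing, so once `Λ^r r^{−α} > 1` we have `s·t ≤ ψ(t)` for all
`t ≥ Λ·T(s)`, while `ψ ≥ 0` bounds `s·t − ψ(t)` by `Λ·s·T(s)` for smaller `t`.
Finally `s·T(s) = s^{(d+ε)/(d+ε−1)} (log s)^{−α/(d+ε−1)}`.
-/

open Filter Real Set Topology

section YoungConj

variable {ψ : ℝ → ℝ} {s B : ℝ}

lemma youngConj_le (h : ∀ t ≥ 0, s * t - ψ t ≤ B) : youngConj ψ s ≤ B :=
  csSup_le ⟨s * 0 - ψ 0, 0, le_rfl, rfl⟩ (by rintro x ⟨t, ht, rfl⟩; exact h t ht)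

lemma le_youngConj (h : ∀ t ≥ 0, s * t - ψ t ≤ B) {t : ℝ} (ht : 0 ≤ t) :
    s * t - ψ t ≤ youngConj ψ s :=
  le_csSup ⟨B, by rintro x ⟨t, ht, rfl⟩; exact h t ht⟩ ⟨t, ht, rfl⟩

lemma mul_sub_le_mul_of_forall_ge {τ : ℝ} (hψ : ∀ t ≥ 0, 0 ≤ ψ t) (hs : 0 ≤ s) (hτ : 0 ≤ τ)
    (hge : ∀ t ≥ τ, s * t ≤ ψ t) : ∀ t ≥ 0, s * t - ψ t ≤ s * τ := by
  intro t ht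
  rcases le_total t τ with htτ | hτt
  · nlinarith [hψ t ht]
  · nlinarith [hge t hτt]

end YoungConj

noncomputable def powLog (a b t : ℝ) : ℝ := t ^ a * log t ^ b

lemma powLog_pos {a b t : ℝ} (ht : 1 < t) : 0 < powLog a b t := by
  have := log_pos ht
  unfold powLog
  positivity

lemma mul_powLog_eq {p b s : ℝ} (hp : p ≠ 1) (hs : 0 < s) :
    s * powLog (1 / (p - 1)) b s = powLog (p / (p - 1)) b s := by
  have hp' : p - 1 ≠ 0 := sub_ne_zero.2 hp
  rw [powLog, powLog, show p / (p - 1) = 1 + 1 / (p - 1) by field_simp; ring,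
    rpow_add hs, rpow_one, mul_assoc]

lemma powLog_inv_rpow {r : ℝ} (hr : 0 < r) (α : ℝ) {s : ℝ} (hs : 1 < s) :
    powLog (1 / r) (-α / r) s ^ r = s * log s ^ (-α) := by
  have hs0 : 0 < s := one_pos.trans hs
  have hl := log_pos hs
  rw [powLog, mul_rpow (by positivity) (by positivity), ← rpow_mul hs0.le, ← rpow_mul hl.le,
    one_div_mul_cancel hr.ne', div_mul_cancel₀ _ hr.ne', rpow_one]

lemma tendsto_log_log_div_log : Tendsto (fun s => log (log s) / log s) atTop (𝓝 0) := by
  simpa [Function.comp_def] using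
    (tendsto_pow_log_div_mul_add_atTop 1 0 1 one_ne_zero).comp tendsto_log_atTop

lemma tendsto_log_powLog_div_log (a b : ℝ) :
    Tendsto (fun s => log (powLog a b s) / log s) atTop (𝓝 a) := by
  have h : Tendsto (fun s => a + b * (log (log s) / log s)) atTop (𝓝 a) := by
    simpa using (tendsto_log_log_div_log.const_mul b).const_add a
  refine h.congr' ?_
  filter_upwards [eventually_gt_atTop 1] with s hs
  have hl := log_pos hs
  rw [powLog, log_mul (by positivity) (by positivity), log_rpow (by linarith), log_rpow hl]
  field_simp

lemma tendsto_powLog_atTop {a : ℝ} (ha : 0 < a) (b : ℝ) : Tendsto (powLog a b) atTop atTop := by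
  have h : Tendsto (fun s => log (powLog a b s) / log s * log s) atTop atTop :=
    (tendsto_log_powLog_div_log a b).pos_mul_atTop ha tendsto_log_atTop
  refine (tendsto_exp_atTop.comp h).congr' ?_
  filter_upwards [eventually_gt_atTop 1] with s hs
  simp [div_mul_cancel₀ _ (log_pos hs).ne', exp_log (powLog_pos hs)]

/-- `r log t + α log log t` is increasing once `log t ≥ |α| / r`, as `log` is `1/u`-Lipschitz
on `[u, ∞)`. -/
lemma monotoneOn_powLog {r : ℝ} (hr : 0 < r) (α : ℝ) :
    MonotoneOn (powLog r α) (Ici (exp (|α| / r + 1))) := by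
  intro x hx y hy hxy
  have hx0 : 0 < x := (exp_pos _).trans_le hx
  have hy0 : 0 < y := hx0.trans_le hxy
  have hu : |α| / r + 1 ≤ log x := (le_log_iff_exp_le hx0).2 hx
  have hu0 : 0 < log x := by linarith [div_nonneg (abs_nonneg α) hr.le]
  have huv : log x ≤ log y := log_le_log hx0 hxy
  have hv0 : 0 < log y := hu0.trans_le huv
  have hw : 0 ≤ log (log y) - log (log x) := sub_nonneg.2 (log_le_log hu0 huv)
  have hwu : (log (log y) - log (log x)) * log x ≤ log y - log x := by
    have := log_le_sub_one_of_pos (div_pos hv0 hu0)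
    rw [log_div hv0.ne' hu0.ne'] at this
    calc _ ≤ (log y / log x - 1) * log x := mul_le_mul_of_nonneg_right this hu0.le
      _ = log y - log x := by field_simp
  have hαu : |α| ≤ r * log x := by
    have := mul_le_mul_of_nonneg_left hu hr.le
    rw [mul_add, mul_div_cancel₀ _ hr.ne'] at this
    linarith
  have hαw : |α| * (log (log y) - log (log x)) ≤ r * (log y - log x) := by
    refine le_of_mul_le_mul_right ?_ hu0
    nlinarith [mul_le_mul_of_nonneg_left hwu (abs_nonneg α),
      mul_le_mul_of_nonneg_left hαu (sub_nonneg.2 huv)]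
  have key : log x * r + log (log x) * α ≤ log y * r + log (log y) * α := by
    nlinarith [neg_abs_le α]
  simp only [powLog]
  rw [rpow_def_of_pos hx0, rpow_def_of_pos hu0, rpow_def_of_pos hy0, rpow_def_of_pos hv0,
    ← exp_add, ← exp_add]
  exact exp_le_exp.2 key

lemma tendsto_powLog_const_mul_inv_div {r : ℝ} (hr : 0 < r) (α : ℝ) {c : ℝ} (hc : 0 < c) :
    Tendsto (fun s => powLog r α (c * powLog (1 / r) (-α / r) s) / s) atTop
      (𝓝 (c ^ r * (1 / r) ^ α)) := by
  have hratio : Tendsto (fun s => log (c * powLog (1 / r) (-α / r) s) / log s) atTop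
      (𝓝 (1 / r)) := by
    have h := ((tendsto_const_nhds (x := log c)).div_atTop tendsto_log_atTop).add
      (tendsto_log_powLog_div_log (1 / r) (-α / r))
    rw [zero_add] at h
    refine h.congr' ?_
    filter_upwards [eventually_gt_atTop 1] with s hs
    rw [log_mul hc.ne' (powLog_pos hs).ne', add_div]
  refine ((hratio.rpow_const (Or.inl (one_div_pos.2 hr).ne')).const_mul (c ^ r)).congr' ?_
  filter_upwards [eventually_gt_atTop 1,
    ((tendsto_powLog_atTop (one_div_pos.2 hr) (-α / r)).const_mul_atTop hc).eventually_gt_atTop 1]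
    with s hs hcT
  have hs0 : 0 < s := one_pos.trans hs
  have hl := log_pos hs
  have hlc := log_pos hcT
  have hlα : 0 < log s ^ α := rpow_pos_of_pos hl α
  rw [powLog.eq_1 r α, mul_rpow hc.le (powLog_pos hs).le, powLog_inv_rpow hr α hs, div_rpow hlc.le hl.le,
    rpow_neg hl.le]
  field_simp

section Bounds

variable {r α t₀ : ℝ} {ψ : ℝ → ℝ}

lemma exists_eventually_mul_sub_le (hr : 0 < r) (hψ0 : ∀ t ≥ 0, 0 ≤ ψ t)
    (hψ : ∀ t ≥ t₀, ψ t = t * powLog r α t) :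
    ∃ Λ > 0, ∀ᶠ s in atTop, ∀ t ≥ 0,
      s * t - ψ t ≤ Λ * (s * powLog (1 / r) (-α / r) s) := by
  set T := powLog (1 / r) (-α / r)
  have hκ : 0 < (1 / r) ^ α := by positivity
  obtain ⟨Λ, hΛ, hΛ0⟩ := (((tendsto_rpow_atTop hr).atTop_mul_const hκ).eventually_gt_atTop 1
    |>.and (eventually_gt_atTop 0)).exists
  have hΛT := (tendsto_powLog_atTop (one_div_pos.2 hr) (-α / r)).const_mul_atTop hΛ0
  refine ⟨Λ, hΛ0, ?_⟩
  filter_upwards [eventually_gt_atTop 0,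
    (tendsto_powLog_const_mul_inv_div hr α hΛ0).eventually (eventually_gt_nhds hΛ),
    hΛT.eventually_ge_atTop t₀, hΛT.eventually_ge_atTop (exp (|α| / r + 1)),
    hΛT.eventually_ge_atTop 0] with s hs hsT ht₀ ht₁ hT0
  have hge : ∀ t ≥ Λ * T s, s * t ≤ ψ t := by
    intro t ht
    have hst : s ≤ powLog r α t := calc
      s ≤ powLog r α (Λ * T s) := by simpa only [one_mul] using ((lt_div_iff₀ hs).1 hsT).le
      _ ≤ powLog r α t := monotoneOn_powLog hr α ht₁ (ht₁.trans ht) ht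
    rw [hψ t (ht₀.trans ht), mul_comm t]
    exact mul_le_mul_of_nonneg_right hst (hT0.trans ht)
  simpa only [mul_left_comm] using mul_sub_le_mul_of_forall_ge hψ0 hs.le hT0 hge

lemma exists_eventually_le_youngConj (hr : 0 < r) (hψ0 : ∀ t ≥ 0, 0 ≤ ψ t)
    (hψ : ∀ t ≥ t₀, ψ t = t * powLog r α t) :
    ∃ c > 0, ∀ᶠ s in atTop, c * (s * powLog (1 / r) (-α / r) s) ≤ youngConj ψ s := by
  set T := powLog (1 / r) (-α / r)
  obtain ⟨Λ, -, hbound⟩ := exists_eventually_mul_sub_le hr hψ0 hψ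
  have h0 : Tendsto (fun c : ℝ => c ^ r * (1 / r) ^ α) (𝓝[>] 0) (𝓝 0) := by
    simpa [zero_rpow hr.ne'] using
      ((continuousAt_rpow_const 0 r (Or.inr hr.le)).tendsto.mono_left nhdsWithin_le_nhds).mul_const
        ((1 / r) ^ α)
  obtain ⟨c, hc, hc0⟩ :=
    ((h0.eventually (eventually_lt_nhds (one_half_pos (α := ℝ)))).and self_mem_nhdsWithin).exists
  have hcT := (tendsto_powLog_atTop (one_div_pos.2 hr) (-α / r)).const_mul_atTop hc0
  refine ⟨c / 2, half_pos hc0, ?_⟩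
  filter_upwards [hbound, eventually_gt_atTop 0,
    (tendsto_powLog_const_mul_inv_div hr α hc0).eventually (eventually_lt_nhds hc),
    hcT.eventually_ge_atTop t₀, hcT.eventually_ge_atTop 0] with s hbs hs hsT ht₀ hT0
  have hh : powLog r α (c * T s) < s / 2 := by
    have := (div_lt_iff₀ hs).1 hsT
    linarith
  calc c / 2 * (s * T s) ≤ s * (c * T s) - ψ (c * T s) := by
        rw [hψ _ ht₀]
        nlinarith [mul_nonneg hT0 (sub_nonneg.2 hh.le)]
    _ ≤ youngConj ψ s := le_youngConj hbs hT0

end Bounds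

theorem stmt19_general (d : ℕ) (hd : 3 ≤ d) (ε α t₀ : ℝ) (hε : 0 < ε)
    (ψ : ℝ → ℝ) (hN : IsNFunction ψ)
    (hψ : ∀ t ≥ t₀, ψ t = t ^ ((d:ℝ) + ε) * Real.log t ^ α) :
    ∃ c₁ c₂ s₀ : ℝ, 0 < c₁ ∧ c₁ ≤ c₂ ∧ 0 < s₀ ∧ ∀ s ≥ s₀,
      c₁ * (s ^ (((d:ℝ) + ε) / ((d:ℝ) + ε - 1)) *
          Real.log s ^ (-α / ((d:ℝ) + ε - 1))) ≤ youngConj ψ s ∧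
      youngConj ψ s ≤ c₂ * (s ^ (((d:ℝ) + ε) / ((d:ℝ) + ε - 1)) *
          Real.log s ^ (-α / ((d:ℝ) + ε - 1))) := by
  obtain ⟨-, hmono, hzero, -, -⟩ := hN
  set p : ℝ := (d:ℝ) + ε
  have hp : 1 < p := by
    have : (3:ℝ) ≤ d := by exact_mod_cast hd
    linarith
  have hψ0 : ∀ t ≥ 0, 0 ≤ ψ t := fun t ht => hzero ▸ hmono (le_refl (0:ℝ)) ht ht
  have hψr : ∀ t ≥ max t₀ 1, ψ t = t * powLog (p - 1) α t := fun t ht => by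
    rw [hψ t (le_of_max_le_left ht), powLog, ← mul_assoc,
      ← rpow_one_add' (one_pos.trans_le (le_of_max_le_right ht)).le (by linarith), add_sub_cancel]
  obtain ⟨c₁, hc₁, hlow⟩ := exists_eventually_le_youngConj (sub_pos.2 hp) hψ0 hψr
  obtain ⟨c₂, -, hup⟩ := exists_eventually_mul_sub_le (sub_pos.2 hp) hψ0 hψr
  obtain ⟨s₀, hs₀⟩ := eventually_atTop.1 (hlow.and ((hup.mono fun s => youngConj_le).and
    (eventually_gt_atTop 1)))
  have hG : ∀ s ≥ s₀, s * powLog (1 / (p - 1)) (-α / (p - 1)) s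
      = s ^ (p / (p - 1)) * log s ^ (-α / (p - 1)) :=
    fun s hs => mul_powLog_eq hp.ne' (one_pos.trans (hs₀ s hs).2.2)
  obtain ⟨hlow₀, hup₀, hs₀1⟩ := hs₀ s₀ le_rfl
  refine ⟨c₁, c₂, s₀, hc₁, le_of_mul_le_mul_right (hlow₀.trans hup₀)
    (mul_pos (one_pos.trans hs₀1) (powLog_pos hs₀1)), one_pos.trans hs₀1, fun s hs => ?_⟩
  rw [← hG s hs]
  exact ⟨(hs₀ s hs).1, (hs₀ s hs).2.1⟩

theorem stmt19 (d : ℕ) (hd : 3 ≤ d) (ε α t₀ : ℝ) (hε : 0 < ε) (ht₀ : 1 < t₀)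
    (ψ : ℝ → ℝ) (hN : IsNFunction ψ)
    (hψ : ∀ t ≥ t₀, ψ t = t ^ ((d:ℝ) + ε) * Real.log t ^ α) :
    ∃ c₁ c₂ s₀ : ℝ, 0 < c₁ ∧ c₁ ≤ c₂ ∧ 0 < s₀ ∧ ∀ s ≥ s₀,
      c₁ * (s ^ (((d:ℝ) + ε) / ((d:ℝ) + ε - 1)) *
          Real.log s ^ (-α / ((d:ℝ) + ε - 1))) ≤ youngConj ψ s ∧
      youngConj ψ s ≤ c₂ * (s ^ (((d:ℝ) + ε) / ((d:ℝ) + ε - 1)) *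
          Real.log s ^ (-α / ((d:ℝ) + ε - 1))) :=
  stmt19_general d hd ε α t₀ hε ψ hN hψ
end
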